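/- arXiv:2506.02180 — 4 statements merged into one kernel-verified Lean document; each statement's English description precedes it below -/
import Mathlib

section
/- Given P-coherences A and B over a posetal symmetric medial linearly distributive poset P, define A ⊗ B = (|A| × |B|, ρ_{A⊗B}) with ρ_{A⊗B}((a,b),(a',b')) = ρ_A(a,a') ⊗ ρ_B(b,b'), and A ⊕ B analogously using ⊕. Then the relation μ_{A,B,C,D} ⊆ ((|A|×|B|)×(|C|×|D|)) × ((|A|×|C|)×(|B|×|D|)) given by componentwise ⊑ is a P-coherence map (A ⊗ B) ⊕ (C ⊗ D) → (A ⊕ C) ⊗ (B ⊕ D). -/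
/-- A small posetal symmetric medial linearly distributive category. -/
structure PosetalSMLDC where
  P : Type*
  po : PartialOrder P
  tens : P → P → P
  par : P → P → P
  top : P
  bot : P
  tens_comm : ∀ a b, tens a b = tens b a
  tens_assoc : ∀ a b c, tens (tens a b) c = tens a (tens b c)
  tens_unit : ∀ a, tens a top = a
  par_comm : ∀ a b, par a b = par b a
  par_assoc : ∀ a b c, par (par a b) c = par a (par b c)
  par_unit : ∀ a, par a bot = a
  tens_mono : ∀ {a a' b b'}, po.le a a' → po.le b b' → po.le (tens a b) (tens a' b')
  par_mono : ∀ {a a' b b'}, po.le a a' → po.le b b' → po.le (par a b) (par a' b')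
  cocontraction : po.le (par top top) top
  contraction : po.le bot (tens bot bot)
  mix : po.le bot top
  medial : ∀ a b c d, po.le (par (tens a b) (tens c d)) (tens (par a c) (par b d))
  distR : ∀ a b c, po.le (tens (par a b) c) (par a (tens b c))
  distL : ∀ a b c, po.le (tens a (par b c)) (par (tens a b) c)

/-- A `P`-coherence: a poset together with a symmetric monotone function to `P`. -/
structure PCoh (Q : PosetalSMLDC) where
  carrier : Type*
  str : PartialOrder carrier
  ρ : carrier → carrier → Q.P
  symm : ∀ a b, ρ a b = ρ b a
  mono : ∀ {a a' b b'}, str.le a a' → str.le b b' →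
    Q.po.le (ρ a b) (ρ a' b')

/-- A `P`-coherence map: a relation that is down-closed in the source, up-closed
in the target, and compatible with `ρ`. -/
def IsPCohMap {Q : PosetalSMLDC} (A B : PCoh Q)
    (f : A.carrier → B.carrier → Prop) : Prop :=
  (∀ a b a', f a b → A.str.le a' a → f a' b) ∧
  (∀ a b b', f a b → B.str.le b b' → f a b') ∧
  (∀ a b a' b', f a b → f a' b' → Q.po.le (A.ρ a a') (B.ρ b b'))

/-- The tensor `A ⊗ B` of `P`-coherences, with
`ρ_{A⊗B}((a,b),(a',b')) = ρ_A(a,a') ⊗ ρ_B(b,b')`. -/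
def PCoh.tensor {Q : PosetalSMLDC} (A B : PCoh Q) : PCoh Q where
  carrier := A.carrier × B.carrier
  str := @Prod.instPartialOrder _ _ A.str B.str
  ρ := fun x y => Q.tens (A.ρ x.1 y.1) (B.ρ x.2 y.2)
  symm := fun x y => by rw [A.symm x.1 y.1, B.symm x.2 y.2]
  mono := fun h h' => Q.tens_mono (A.mono h.1 h'.1) (B.mono h.2 h'.2)

/-- The par `A ⊕ B` of `P`-coherences, with
`ρ_{A⊕B}((a,b),(a',b')) = ρ_A(a,a') ⊕ ρ_B(b,b')`. -/
def PCoh.par {Q : PosetalSMLDC} (A B : PCoh Q) : PCoh Q where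
  carrier := A.carrier × B.carrier
  str := @Prod.instPartialOrder _ _ A.str B.str
  ρ := fun x y => Q.par (A.ρ x.1 y.1) (B.ρ x.2 y.2)
  symm := fun x y => by rw [A.symm x.1 y.1, B.symm x.2 y.2]
  mono := fun h h' => Q.par_mono (A.mono h.1 h'.1) (B.mono h.2 h'.2)

/-- The medial relation, given componentwise by `⊑`, is a `P`-coherence map
`(A ⊗ B) ⊕ (C ⊗ D) ⟶ (A ⊕ C) ⊗ (B ⊕ D)`. -/
theorem medial_is_pcoh_map {Q : PosetalSMLDC} (A B C D : PCoh Q) :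
    IsPCohMap ((A.tensor B).par (C.tensor D)) ((A.par C).tensor (B.par D))
      (fun x y =>
        A.str.le x.1.1 y.1.1 ∧ B.str.le x.1.2 y.2.1 ∧
        C.str.le x.2.1 y.1.2 ∧ D.str.le x.2.2 y.2.2) := by
  refine ⟨?_, ?_, ?_⟩
  · rintro ⟨⟨a,b⟩,⟨c,d⟩⟩ ⟨⟨a',c'⟩,⟨b',d'⟩⟩ ⟨⟨a2,b2⟩,⟨c2,d2⟩⟩ ⟨h1,h2,h3,h4⟩ ⟨⟨l1,l2⟩,⟨l3,l4⟩⟩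
    exact ⟨A.str.le_trans _ _ _ l1 h1, B.str.le_trans _ _ _ l2 h2,
      C.str.le_trans _ _ _ l3 h3, D.str.le_trans _ _ _ l4 h4⟩
  · rintro ⟨⟨a,b⟩,⟨c,d⟩⟩ ⟨⟨a',c'⟩,⟨b',d'⟩⟩ ⟨⟨a2,c2⟩,⟨b2,d2⟩⟩ ⟨h1,h2,h3,h4⟩ ⟨⟨l1,l2⟩,⟨l3,l4⟩⟩
    exact ⟨A.str.le_trans _ _ _ h1 l1, B.str.le_trans _ _ _ h2 l3,
      C.str.le_trans _ _ _ h3 l2, D.str.le_trans _ _ _ h4 l4⟩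
  · rintro ⟨⟨a,b⟩,⟨c,d⟩⟩ ⟨⟨a',c'⟩,⟨b',d'⟩⟩ ⟨⟨a2,b2⟩,⟨c2,d2⟩⟩ ⟨⟨a2',c2'⟩,⟨b2',d2'⟩⟩
      ⟨h1,h2,h3,h4⟩ ⟨g1,g2,g3,g4⟩
    refine Q.po.le_trans _ _ _ (Q.medial _ _ _ _) ?_
    exact Q.tens_mono (Q.par_mono (A.mono h1 g1) (C.mono h3 g3))
      (Q.par_mono (B.mono h2 g2) (D.mono h4 g4))
end

section
/- In any monoidal category with a chosen map m : ⊥ → ⊤ between the par unit and tensor unit of a linearly distributive structure, the mix condition holds if and only if (1_⊥ ⊗ m); (ρ^⊗_⊥)⁻¹ = (m ⊗ 1_⊥); (λ^⊗_⊥)⁻¹ as maps ⊥ ⊗ ⊥ → ⊥, where ρ^⊗ and λ^⊗ are the tensor unitors. (Führmann–Pym criterion.) -/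
open CategoryTheory

universe v u

/-- A monoidal structure on a category, given by explicit data. -/
structure MonStr (V : Type u) [Category.{v} V] where
  t : V → V → V
  map : ∀ {X₁ Y₁ X₂ Y₂ : V}, (X₁ ⟶ Y₁) → (X₂ ⟶ Y₂) → (t X₁ X₂ ⟶ t Y₁ Y₂)
  map_id : ∀ X Y, map (𝟙 X) (𝟙 Y) = 𝟙 (t X Y)
  map_comp : ∀ {X₁ Y₁ Z₁ X₂ Y₂ Z₂ : V} (f₁ : X₁ ⟶ Y₁) (g₁ : Y₁ ⟶ Z₁)
    (f₂ : X₂ ⟶ Y₂) (g₂ : Y₂ ⟶ Z₂),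
    map (f₁ ≫ g₁) (f₂ ≫ g₂) = map f₁ f₂ ≫ map g₁ g₂
  e : V
  a : ∀ X Y Z, t (t X Y) Z ≅ t X (t Y Z)
  a_nat : ∀ {X₁ Y₁ X₂ Y₂ X₃ Y₃ : V} (f₁ : X₁ ⟶ Y₁) (f₂ : X₂ ⟶ Y₂) (f₃ : X₃ ⟶ Y₃),
    map (map f₁ f₂) f₃ ≫ (a Y₁ Y₂ Y₃).hom = (a X₁ X₂ X₃).hom ≫ map f₁ (map f₂ f₃)
  l : ∀ X, t e X ≅ X
  r : ∀ X, t X e ≅ X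
  l_nat : ∀ {X Y : V} (f : X ⟶ Y), map (𝟙 e) f ≫ (l Y).hom = (l X).hom ≫ f
  r_nat : ∀ {X Y : V} (f : X ⟶ Y), map f (𝟙 e) ≫ (r Y).hom = (r X).hom ≫ f
  pentagon : ∀ W X Y Z,
    map (a W X Y).hom (𝟙 Z) ≫ (a W (t X Y) Z).hom ≫ map (𝟙 W) (a X Y Z).hom
      = (a (t W X) Y Z).hom ≫ (a W X (t Y Z)).hom
  triangle : ∀ X Y, (a X e Y).hom ≫ map (𝟙 X) (l Y).hom = map (r X).hom (𝟙 Y)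

/-- A symmetric monoidal structure on a category, given by explicit data. -/
structure SymMonStr (V : Type u) [Category.{v} V] extends MonStr V where
  b : ∀ X Y, t X Y ≅ t Y X
  b_nat : ∀ {X₁ Y₁ X₂ Y₂ : V} (f : X₁ ⟶ Y₁) (g : X₂ ⟶ Y₂),
    map f g ≫ (b Y₁ Y₂).hom = (b X₁ X₂).hom ≫ map g f
  symmetry : ∀ X Y, (b X Y).hom ≫ (b Y X).hom = 𝟙 (t X Y)
  hexagon : ∀ X Y Z,
    (a X Y Z).hom ≫ (b X (t Y Z)).hom ≫ (a Y Z X).hom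
      = map (b X Y).hom (𝟙 Z) ≫ (a Y X Z).hom ≫ map (𝟙 Y) (b X Z).hom

/-- The canonical flip `(W ⊗ X) ⊗ (Y ⊗ Z) ⟶ (W ⊗ Y) ⊗ (X ⊗ Z)` of a symmetric
monoidal structure. -/
def SymMonStr.flip {V : Type u} [Category.{v} V] (M : SymMonStr V) (W X Y Z : V) :
    M.t (M.t W X) (M.t Y Z) ⟶ M.t (M.t W Y) (M.t X Z) :=
  (M.a W X (M.t Y Z)).hom ≫
    M.map (𝟙 W) ((M.a X Y Z).inv ≫ M.map (M.b X Y).hom (𝟙 Z) ≫ (M.a Y X Z).hom) ≫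
    (M.a W Y (M.t X Z)).inv

/-- `⟨A, Δ, e⟩` is a comonoid with respect to the monoidal structure `M`. -/
def MonStr.IsComonoid {V : Type u} [Category.{v} V] (M : MonStr V) (A : V)
    (Δ : A ⟶ M.t A A) (e : A ⟶ M.e) : Prop :=
  (Δ ≫ M.map Δ (𝟙 A) ≫ (M.a A A A).hom = Δ ≫ M.map (𝟙 A) Δ) ∧
  (Δ ≫ M.map e (𝟙 A) ≫ (M.l A).hom = 𝟙 A) ∧
  (Δ ≫ M.map (𝟙 A) e ≫ (M.r A).hom = 𝟙 A)

/-- `⟨A, ∇, u⟩` is a monoid with respect to the monoidal structure `M`. -/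
def MonStr.IsMonoid {V : Type u} [Category.{v} V] (M : MonStr V) (A : V)
    (m : M.t A A ⟶ A) (u : M.e ⟶ A) : Prop :=
  (M.map m (𝟙 A) ≫ m = (M.a A A A).hom ≫ M.map (𝟙 A) m ≫ m) ∧
  (M.map u (𝟙 A) ≫ m = (M.l A).hom) ∧
  (M.map (𝟙 A) u ≫ m = (M.r A).hom)
/-- A linearly distributive category structure: a tensor monoidal structure `T`
(unit `⊤ = T.e`), a par monoidal structure `P` (unit `⊥ = P.e`), and natural
left and right linear distributivities satisfying the coherence conditions
(LDC.1)–(LDC.3). -/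
structure LDCStr (V : Type u) [Category.{v} V] where
  T : MonStr V
  P : MonStr V
  δL : ∀ A B X : V, T.t A (P.t B X) ⟶ P.t (T.t A B) X
  δR : ∀ A B X : V, T.t (P.t A B) X ⟶ P.t A (T.t B X)
  δL_nat : ∀ {A A' B B' X X' : V} (f : A ⟶ A') (g : B ⟶ B') (h : X ⟶ X'),
    T.map f (P.map g h) ≫ δL A' B' X' = δL A B X ≫ P.map (T.map f g) h
  δR_nat : ∀ {A A' B B' X X' : V} (f : A ⟶ A') (g : B ⟶ B') (h : X ⟶ X'),
    T.map (P.map f g) h ≫ δR A' B' X' = δR A B X ≫ P.map f (T.map g h)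
  -- (LDC.1)
  unit_δL : ∀ A B, (T.l (P.t A B)).inv ≫ δL T.e A B = P.map (T.l A).inv (𝟙 B)
  unit_δR : ∀ A B, (T.r (P.t A B)).inv ≫ δR A B T.e = P.map (𝟙 A) (T.r B).inv
  counit_δR : ∀ A B, δR P.e A B ≫ (P.l (T.t A B)).hom = T.map (P.l A).hom (𝟙 B)
  counit_δL : ∀ A B, δL A B P.e ≫ (P.r (T.t A B)).hom = T.map (𝟙 A) (P.r B).hom
  -- (LDC.2)
  assoc_δL : ∀ A B X Y, δL (T.t A B) X Y ≫ P.map (T.a A B X).hom (𝟙 Y)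
    = (T.a A B (P.t X Y)).hom ≫ T.map (𝟙 A) (δL B X Y) ≫ δL A (T.t B X) Y
  assoc_δR : ∀ A B X Y, (T.a (P.t A B) X Y).hom ≫ δR A B (T.t X Y)
    = T.map (δR A B X) (𝟙 Y) ≫ δR A (T.t B X) Y ≫ P.map (𝟙 A) (T.a B X Y).hom
  assoc_δL' : ∀ A B X Y, δL A B (P.t X Y) ≫ (P.a (T.t A B) X Y).inv
    = T.map (𝟙 A) (P.a B X Y).inv ≫ δL A (P.t B X) Y ≫ P.map (δL A B X) (𝟙 Y)
  assoc_δR' : ∀ A B X Y, T.map (P.a A B X).inv (𝟙 Y) ≫ δR (P.t A B) X Y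
    = δR A (P.t B X) Y ≫ P.map (𝟙 A) (δR B X Y) ≫ (P.a A B (T.t X Y)).inv
  -- (LDC.3)
  leftright₁ : ∀ A B X Y, δL (P.t A B) X Y ≫ P.map (δR A B X) (𝟙 Y)
    = δR A B (P.t X Y) ≫ P.map (𝟙 A) (δL B X Y) ≫ (P.a A (T.t B X) Y).inv
  leftright₂ : ∀ A B X Y, T.map (δL A B X) (𝟙 Y) ≫ δR (T.t A B) X Y
    = (T.a A (P.t B X) Y).hom ≫ T.map (𝟙 A) (δR B X Y) ≫ δL A B (T.t X Y)

/-- The mix condition for a linearly distributive category with respect to a map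
`m : ⊥ ⟶ ⊤`: the two canonical composites `A ⊗ B ⟶ A ⊕ B` built from `m`, the
unitors, and the linear distributivities agree. -/
def LDCStr.IsMix {V : Type u} [Category.{v} V] (L : LDCStr V)
    (m : L.P.e ⟶ L.T.e) : Prop :=
  ∀ A B : V,
    L.T.map ((L.P.r A).inv ≫ L.P.map (𝟙 A) m) (𝟙 B) ≫ L.δR A L.T.e B ≫
        L.P.map (𝟙 A) (L.T.l B).hom
      = L.T.map (𝟙 A) ((L.P.l B).inv ≫ L.P.map m (𝟙 B)) ≫ L.δL A L.T.e B ≫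
        L.P.map (L.T.r A).hom (𝟙 B)

section KellyHelpers

variable {V : Type u} [Category.{v} V]

lemma MonStr.wl (M : MonStr V) (X : V) {Y Z W : V} (f : Y ⟶ Z) (g : Z ⟶ W) :
    M.map (𝟙 X) (f ≫ g) = M.map (𝟙 X) f ≫ M.map (𝟙 X) g := by
  rw [← M.map_comp, Category.id_comp]

lemma MonStr.wr (M : MonStr V) (X : V) {Y Z W : V} (f : Y ⟶ Z) (g : Z ⟶ W) :
    M.map (f ≫ g) (𝟙 X) = M.map f (𝟙 X) ≫ M.map g (𝟙 X) := by
  rw [← M.map_comp, Category.id_comp]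

lemma MonStr.exch (M : MonStr V) {X Y Z W : V} (f : X ⟶ Y) (g : Z ⟶ W) :
    M.map f (𝟙 Z) ≫ M.map (𝟙 Y) g = M.map (𝟙 X) g ≫ M.map f (𝟙 W) := by
  rw [← M.map_comp, ← M.map_comp]
  simp only [Category.id_comp, Category.comp_id]

lemma MonStr.a_inv_nat (M : MonStr V) {X₁ Y₁ X₂ Y₂ X₃ Y₃ : V}
    (f₁ : X₁ ⟶ Y₁) (f₂ : X₂ ⟶ Y₂) (f₃ : X₃ ⟶ Y₃) :
    (M.a X₁ X₂ X₃).inv ≫ M.map (M.map f₁ f₂) f₃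
      = M.map f₁ (M.map f₂ f₃) ≫ (M.a Y₁ Y₂ Y₃).inv := by
  rw [Iso.inv_comp_eq, ← Category.assoc, ← M.a_nat, Category.assoc, Iso.hom_inv_id,
    Category.comp_id]

lemma MonStr.triangle_inv (M : MonStr V) (X Y : V) :
    (M.a X M.e Y).inv ≫ M.map (M.r X).hom (𝟙 Y) = M.map (𝟙 X) (M.l Y).hom := by
  rw [Iso.inv_comp_eq]
  exact (M.triangle X Y).symm

/-- Kelly's lemma `λ_e = ρ_e`, obtained by transporting along a mathlib
`MonoidalCategory` instance built from the data. -/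
lemma MonStr.unitors_eq (M : MonStr V) : (M.l M.e).hom = (M.r M.e).hom := by
  letI : MonoidalCategory V :=
  { tensorObj := M.t
    whiskerLeft := fun X _ _ f => M.map (𝟙 X) f
    whiskerRight := fun f X => M.map f (𝟙 X)
    tensorHom := fun f g => M.map f g
    tensorUnit := M.e
    associator := M.a
    leftUnitor := M.l
    rightUnitor := M.r
    tensorHom_def := fun f g => by
      show M.map f g = M.map f (𝟙 _) ≫ M.map (𝟙 _) g
      rw [← M.map_comp, Category.comp_id, Category.id_comp]
    id_tensorHom_id := fun X Y => M.map_id X Y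
    tensorHom_comp_tensorHom := fun f₁ f₂ g₁ g₂ => (M.map_comp f₁ g₁ f₂ g₂).symm
    whiskerLeft_id := fun X Y => M.map_id X Y
    id_whiskerRight := fun X Y => M.map_id X Y
    associator_naturality := fun f₁ f₂ f₃ => M.a_nat f₁ f₂ f₃
    leftUnitor_naturality := fun f => M.l_nat f
    rightUnitor_naturality := fun f => M.r_nat f
    pentagon := M.pentagon
    triangle := M.triangle }
  exact MonoidalCategory.unitors_equal

end KellyHelpers


namespace LDCStr

variable {V : Type u} [Category.{v} V] (L : LDCStr V) (m : L.P.e ⟶ L.T.e)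

lemma lem3 (B : V) :
    L.δL L.P.e L.P.e B
        ≫ L.P.map (L.T.map m (𝟙 L.P.e) ≫ (L.T.l L.P.e).hom) (𝟙 B) ≫ (L.P.l B).hom
      = L.T.map (𝟙 L.P.e) (L.P.l B).hom ≫ L.T.map m (𝟙 B) ≫ (L.T.l B).hom := by
  have h1 : L.δL L.P.e L.P.e B ≫ L.P.map (L.T.map m (𝟙 L.P.e)) (𝟙 B)
      = L.T.map m (𝟙 (L.P.t L.P.e B)) ≫ L.δL L.T.e L.P.e B := by
    have h := L.δL_nat m (𝟙 L.P.e) (𝟙 B)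
    rw [L.P.map_id] at h
    exact h.symm
  have h2 : L.δL L.T.e L.P.e B ≫ L.P.map (L.T.l L.P.e).hom (𝟙 B)
      = (L.T.l (L.P.t L.P.e B)).hom := by
    have h := L.unit_δL L.P.e B
    rw [Iso.inv_comp_eq] at h
    rw [h, Category.assoc, ← L.P.map_comp]
    simp [L.P.map_id]
  rw [L.P.wr]
  try simp only [Category.assoc]
  rw [reassoc_of% h1, reassoc_of% h2]
  rw [← L.T.l_nat (L.P.l B).hom, ← Category.assoc, L.T.exch, Category.assoc]

lemma lem4 (A : V) :
    L.δR A L.P.e L.P.e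
        ≫ L.P.map (𝟙 A) (L.T.map (𝟙 L.P.e) m ≫ (L.T.r L.P.e).hom) ≫ (L.P.r A).hom
      = L.T.map (L.P.r A).hom (𝟙 L.P.e) ≫ L.T.map (𝟙 A) m ≫ (L.T.r A).hom := by
  have h1 : L.δR A L.P.e L.P.e ≫ L.P.map (𝟙 A) (L.T.map (𝟙 L.P.e) m)
      = L.T.map (𝟙 (L.P.t A L.P.e)) m ≫ L.δR A L.P.e L.T.e := by
    have h := L.δR_nat (𝟙 A) (𝟙 L.P.e) m
    rw [L.P.map_id] at h
    exact h.symm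
  have h2 : L.δR A L.P.e L.T.e ≫ L.P.map (𝟙 A) (L.T.r L.P.e).hom
      = (L.T.r (L.P.t A L.P.e)).hom := by
    have h := L.unit_δR A L.P.e
    rw [Iso.inv_comp_eq] at h
    rw [h, Category.assoc, ← L.P.map_comp]
    simp [L.P.map_id]
  rw [L.P.wl]
  try simp only [Category.assoc]
  rw [reassoc_of% h1, reassoc_of% h2]
  rw [← L.T.r_nat (L.P.r A).hom, ← Category.assoc, ← L.T.exch, Category.assoc]

lemma central_eq (A B : V) (w : L.T.t L.P.e L.P.e ⟶ L.P.e) :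
    L.δR A L.P.e (L.P.t L.P.e B)
        ≫ L.P.map (𝟙 A) (L.δL L.P.e L.P.e B ≫ L.P.map w (𝟙 B) ≫ (L.P.l B).hom)
      = L.δL (L.P.t A L.P.e) L.P.e B
        ≫ L.P.map (L.δR A L.P.e L.P.e ≫ L.P.map (𝟙 A) w ≫ (L.P.r A).hom) (𝟙 B) := by
  rw [L.P.wl, L.P.wl, L.P.wr, L.P.wr]
  try simp only [Category.assoc]
  rw [reassoc_of% (L.leftright₁ A L.P.e L.P.e B)]
  rw [reassoc_of% (L.P.a_inv_nat (𝟙 A) w (𝟙 B))]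
  rw [L.P.triangle_inv]

lemma mixR_central (A B : V) :
    L.T.map ((L.P.r A).inv ≫ L.P.map (𝟙 A) m) (𝟙 B) ≫ L.δR A L.T.e B
        ≫ L.P.map (𝟙 A) (L.T.l B).hom
      = L.T.map (L.P.r A).inv (L.P.l B).inv ≫ L.δR A L.P.e (L.P.t L.P.e B)
        ≫ L.P.map (𝟙 A) (L.δL L.P.e L.P.e B
            ≫ L.P.map (L.T.map m (𝟙 L.P.e) ≫ (L.T.l L.P.e).hom) (𝟙 B)
            ≫ (L.P.l B).hom) := by
  rw [L.lem3 m B, L.P.wl]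
  have h1 : L.T.map (𝟙 (L.P.t A L.P.e)) (L.P.l B).hom ≫ L.δR A L.P.e B
      = L.δR A L.P.e (L.P.t L.P.e B)
        ≫ L.P.map (𝟙 A) (L.T.map (𝟙 L.P.e) (L.P.l B).hom) := by
    have h := L.δR_nat (𝟙 A) (𝟙 L.P.e) (L.P.l B).hom
    rwa [L.P.map_id] at h
  rw [← reassoc_of% h1]
  have h2 : L.T.map (L.P.r A).inv (L.P.l B).inv
        ≫ L.T.map (𝟙 (L.P.t A L.P.e)) (L.P.l B).hom
      = L.T.map (L.P.r A).inv (𝟙 B) := by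
    rw [← L.T.map_comp]; simp
  rw [reassoc_of% h2]
  rw [L.T.wr]
  have h3 : L.T.map (L.P.map (𝟙 A) m) (𝟙 B) ≫ L.δR A L.T.e B
      = L.δR A L.P.e B ≫ L.P.map (𝟙 A) (L.T.map m (𝟙 B)) := L.δR_nat (𝟙 A) m (𝟙 B)
  try simp only [Category.assoc]
  rw [reassoc_of% h3, ← L.P.wl]

lemma mixL_central (A B : V) :
    L.T.map (𝟙 A) ((L.P.l B).inv ≫ L.P.map m (𝟙 B)) ≫ L.δL A L.T.e B
        ≫ L.P.map (L.T.r A).hom (𝟙 B)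
      = L.T.map (L.P.r A).inv (L.P.l B).inv ≫ L.δL (L.P.t A L.P.e) L.P.e B
        ≫ L.P.map (L.δR A L.P.e L.P.e
            ≫ L.P.map (𝟙 A) (L.T.map (𝟙 L.P.e) m ≫ (L.T.r L.P.e).hom)
            ≫ (L.P.r A).hom) (𝟙 B) := by
  rw [L.lem4 m A, L.P.wr]
  have h1 : L.T.map (L.P.r A).hom (𝟙 (L.P.t L.P.e B)) ≫ L.δL A L.P.e B
      = L.δL (L.P.t A L.P.e) L.P.e B
        ≫ L.P.map (L.T.map (L.P.r A).hom (𝟙 L.P.e)) (𝟙 B) := by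
    have h := L.δL_nat (L.P.r A).hom (𝟙 L.P.e) (𝟙 B)
    rwa [L.P.map_id] at h
  rw [← reassoc_of% h1]
  have h2 : L.T.map (L.P.r A).inv (L.P.l B).inv
        ≫ L.T.map (L.P.r A).hom (𝟙 (L.P.t L.P.e B))
      = L.T.map (𝟙 A) (L.P.l B).inv := by
    rw [← L.T.map_comp]; simp
  rw [reassoc_of% h2]
  rw [L.T.wl]
  have h3 : L.T.map (𝟙 A) (L.P.map m (𝟙 B)) ≫ L.δL A L.T.e B
      = L.δL A L.P.e B ≫ L.P.map (L.T.map (𝟙 A) m) (𝟙 B) := L.δL_nat (𝟙 A) m (𝟙 B)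
  try simp only [Category.assoc]
  rw [reassoc_of% h3, ← L.P.wr]

end LDCStr


/-- (Führmann–Pym) A linearly distributive category with a map `m : ⊥ ⟶ ⊤` is
mix if and only if `(1_⊥ ⊗ m); (ρ^⊗_⊥)⁻¹ = (m ⊗ 1_⊥); (λ^⊗_⊥)⁻¹` as maps
`⊥ ⊗ ⊥ ⟶ ⊥`. -/
theorem fuhrmann_pym_mix_criterion {V : Type u} [Category.{v} V]
    (L : LDCStr V) (m : L.P.e ⟶ L.T.e) :
    L.IsMix m ↔
      L.T.map (𝟙 L.P.e) m ≫ (L.T.r L.P.e).hom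
        = L.T.map m (𝟙 L.P.e) ≫ (L.T.l L.P.e).hom := by
  constructor
  · intro h
    have kelly := L.P.unitors_eq
    have h0 := h L.P.e L.P.e
    have hL : L.T.map ((L.P.r L.P.e).inv ≫ L.P.map (𝟙 L.P.e) m) (𝟙 L.P.e)
          ≫ L.δR L.P.e L.T.e L.P.e
          ≫ L.P.map (𝟙 L.P.e) (L.T.l L.P.e).hom ≫ (L.P.l L.P.e).hom
        = L.T.map m (𝟙 L.P.e) ≫ (L.T.l L.P.e).hom := by
      rw [L.P.l_nat (L.T.l L.P.e).hom]
      rw [reassoc_of% (L.counit_δR L.T.e L.P.e)]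
      rw [← Category.assoc, ← L.T.wr, Category.assoc, L.P.l_nat m]
      rw [kelly, Iso.inv_hom_id_assoc]
    have hR : L.T.map (𝟙 L.P.e) ((L.P.l L.P.e).inv ≫ L.P.map m (𝟙 L.P.e))
          ≫ L.δL L.P.e L.T.e L.P.e
          ≫ L.P.map (L.T.r L.P.e).hom (𝟙 L.P.e) ≫ (L.P.l L.P.e).hom
        = L.T.map (𝟙 L.P.e) m ≫ (L.T.r L.P.e).hom := by
      rw [kelly]
      rw [L.P.r_nat (L.T.r L.P.e).hom]
      rw [reassoc_of% (L.counit_δL L.P.e L.T.e)]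
      rw [← Category.assoc, ← L.T.wl, Category.assoc, L.P.r_nat m]
      rw [← kelly, Iso.inv_hom_id_assoc]
    rw [← hR, ← reassoc_of% h0]
    exact hL
  · intro hc A B
    rw [L.mixR_central m A B, L.mixL_central m A B, hc, L.central_eq]
end

section
/- Every symmetric linearly distributive category in which ⊥ carries a ⊗-comonoid structure ⟨⊥, Δ_⊥ : ⊥ → ⊥ ⊗ ⊥, e_⊥ : ⊥ → ⊤⟩ is mix, with mix map m = e_⊥; dually, every symmetric linearly distributive category in which ⊤ carries a ⊕-monoid structure ⟨⊤, ∇_⊤ : ⊤ ⊕ ⊤ → ⊤, u_⊤ : ⊥ → ⊤⟩ is mix with m = u_⊤. -/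
open CategoryTheory

universe v u

/-- A symmetric linearly distributive category: an LDC whose tensor and par
structures carry symmetric braidings interacting coherently with the linear
distributivities (condition (SLDC)). -/
structure SLDCStr (V : Type u) [Category.{v} V] where
  L : LDCStr V
  bT : ∀ X Y, L.T.t X Y ≅ L.T.t Y X
  bT_nat : ∀ {X₁ Y₁ X₂ Y₂ : V} (f : X₁ ⟶ Y₁) (g : X₂ ⟶ Y₂),
    L.T.map f g ≫ (bT Y₁ Y₂).hom = (bT X₁ X₂).hom ≫ L.T.map g f
  bT_symmetry : ∀ X Y, (bT X Y).hom ≫ (bT Y X).hom = 𝟙 (L.T.t X Y)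
  bT_hexagon : ∀ X Y Z,
    (L.T.a X Y Z).hom ≫ (bT X (L.T.t Y Z)).hom ≫ (L.T.a Y Z X).hom
      = L.T.map (bT X Y).hom (𝟙 Z) ≫ (L.T.a Y X Z).hom ≫ L.T.map (𝟙 Y) (bT X Z).hom
  bP : ∀ X Y, L.P.t X Y ≅ L.P.t Y X
  bP_nat : ∀ {X₁ Y₁ X₂ Y₂ : V} (f : X₁ ⟶ Y₁) (g : X₂ ⟶ Y₂),
    L.P.map f g ≫ (bP Y₁ Y₂).hom = (bP X₁ X₂).hom ≫ L.P.map g f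
  bP_symmetry : ∀ X Y, (bP X Y).hom ≫ (bP Y X).hom = 𝟙 (L.P.t X Y)
  bP_hexagon : ∀ X Y Z,
    (L.P.a X Y Z).hom ≫ (bP X (L.P.t Y Z)).hom ≫ (L.P.a Y Z X).hom
      = L.P.map (bP X Y).hom (𝟙 Z) ≫ (L.P.a Y X Z).hom ≫ L.P.map (𝟙 Y) (bP X Z).hom
  -- (SLDC): the linear distributivities interact coherently with the braidings
  sldc : ∀ A B X : V,
    L.δR A B X
      = (bT (L.P.t A B) X).hom ≫ L.T.map (𝟙 X) (bP A B).hom ≫ L.δL X B A ≫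
          L.P.map (bT X B).hom (𝟙 A) ≫ (bP (L.T.t B X) A).hom

/-! For `k : ⊥ ⊗ ⊥ ⟶ ⊥` the linear distributivities extend `k` to maps
`absorbL k X : ⊥ ⊗ X ⟶ X`, natural in `X` with `absorbL k ⊥ = k`, and `absorbR k X : X ⊗ ⊥ ⟶ X`;
by (LDC.3), `δR` followed by `absorbL k` equals `δL` followed by `absorbR k`. The two mix
composites have exactly these shapes, for `k` the two erasures `(m ⊗ 1) ≫ λ` and `(1 ⊗ m) ≫ ρ`
of a factor of `⊥ ⊗ ⊥`, so mix holds once the erasures agree. If `Δ ≫ (1 ⊗ m) ≫ ρ = 1`, then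
`(Δ ⊗ 1) ≫ α` is a section of both `absorbL ((1 ⊗ m) ≫ ρ)` at `⊥ ⊗ ⊥` and `1 ⊗ ((m ⊗ 1) ≫ λ)`,
and naturality of `absorbL` gives `(m ⊗ 1) ≫ λ = absorbL ((1 ⊗ m) ≫ ρ) ⊥ = (1 ⊗ m) ≫ ρ`.

The `⊕`-monoid case is the comonoid case in `Vᵒᵖ`, where `⊗` and `⊕` trade places. -/

namespace MonStr

variable {V : Type u} [Category.{v} V] (M : MonStr V)

lemma map_comp_id {X Y Z : V} (f : X ⟶ Y) (g : Y ⟶ Z) (W : V) :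
    M.map (f ≫ g) (𝟙 W) = M.map f (𝟙 W) ≫ M.map g (𝟙 W) := by
  rw [← M.map_comp, Category.comp_id]

lemma map_id_comp (W : V) {X Y Z : V} (f : X ⟶ Y) (g : Y ⟶ Z) :
    M.map (𝟙 W) (f ≫ g) = M.map (𝟙 W) f ≫ M.map (𝟙 W) g := by
  rw [← M.map_comp, Category.comp_id]

lemma whisker_exchange {X₁ Y₁ X₂ Y₂ : V} (f : X₁ ⟶ Y₁) (g : X₂ ⟶ Y₂) :
    M.map f (𝟙 X₂) ≫ M.map (𝟙 Y₁) g = M.map (𝟙 X₁) g ≫ M.map f (𝟙 Y₂) := by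
  rw [← M.map_comp, ← M.map_comp]
  simp only [Category.id_comp, Category.comp_id]

lemma l_inv_nat {X Y : V} (f : X ⟶ Y) :
    f ≫ (M.l Y).inv = (M.l X).inv ≫ M.map (𝟙 M.e) f := by
  rw [Iso.comp_inv_eq, Category.assoc, M.l_nat, Iso.inv_hom_id_assoc]

lemma map_id_inv_hom_id (W : V) {X Y : V} (i : X ≅ Y) :
    M.map (𝟙 W) i.inv ≫ M.map (𝟙 W) i.hom = 𝟙 (M.t W Y) := by
  rw [← M.map_id_comp, Iso.inv_hom_id, M.map_id]

lemma map_inv_hom_id_id {X Y : V} (i : X ≅ Y) (W : V) :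
    M.map i.inv (𝟙 W) ≫ M.map i.hom (𝟙 W) = 𝟙 (M.t Y W) := by
  rw [← M.map_comp_id, Iso.inv_hom_id, M.map_id]

abbrev toMonoidalCategory : MonoidalCategory V :=
  letI : MonoidalCategoryStruct V :=
    { tensorObj := M.t
      whiskerLeft := fun X _ _ g => M.map (𝟙 X) g
      whiskerRight := fun f Y => M.map f (𝟙 Y)
      tensorHom := M.map
      tensorUnit := M.e
      associator := M.a
      leftUnitor := M.l
      rightUnitor := M.r }
  MonoidalCategory.ofTensorHom M.map_id (fun _ _ _ _ => rfl) (fun _ _ => rfl)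
    (fun f₁ f₂ g₁ g₂ => (M.map_comp f₁ g₁ f₂ g₂).symm) M.a_nat M.l_nat M.r_nat
    M.pentagon M.triangle

lemma unitors_equal : M.l M.e = M.r M.e :=
  let _ := M.toMonoidalCategory
  Iso.ext MonoidalCategory.unitors_equal

abbrev op : MonStr Vᵒᵖ where
  t X Y := Opposite.op (M.t X.unop Y.unop)
  map f g := (M.map f.unop g.unop).op
  map_id X Y := Quiver.Hom.unop_inj (M.map_id X.unop Y.unop)
  map_comp f₁ g₁ f₂ g₂ := Quiver.Hom.unop_inj (M.map_comp g₁.unop f₁.unop g₂.unop f₂.unop)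
  e := Opposite.op M.e
  a X Y Z := (M.a X.unop Y.unop Z.unop).symm.op
  a_nat f₁ f₂ f₃ := by
    let _ := M.toMonoidalCategory; exact MonoidalCategory.associator_naturality (C := Vᵒᵖ) f₁ f₂ f₃
  l X := (M.l X.unop).symm.op
  r X := (M.r X.unop).symm.op
  l_nat f := by
    let _ := M.toMonoidalCategory; exact MonoidalCategory.leftUnitor_naturality (C := Vᵒᵖ) f
  r_nat f := by
    let _ := M.toMonoidalCategory; exact MonoidalCategory.rightUnitor_naturality (C := Vᵒᵖ) f
  pentagon W X Y Z := by
    let _ := M.toMonoidalCategory; exact MonoidalCategory.pentagon (C := Vᵒᵖ) W X Y Z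
  triangle X Y := by let _ := M.toMonoidalCategory; exact MonoidalCategory.triangle (C := Vᵒᵖ) X Y

lemma isComonoid_op_iff {A : V} (μ : M.t A A ⟶ A) (η : M.e ⟶ A) :
    M.op.IsComonoid (Opposite.op A) μ.op η.op ↔ M.IsMonoid A μ η := by
  simp only [IsComonoid, IsMonoid, ← Quiver.Hom.unop_inj.eq_iff]
  simp only [unop_comp, Iso.op_hom, Iso.symm_hom, Quiver.Hom.unop_op, unop_id, Category.assoc,
    Iso.inv_comp_eq, Category.comp_id]

def eraseL {B : V} (m : B ⟶ M.e) (X : V) : M.t B X ⟶ X := M.map m (𝟙 X) ≫ (M.l X).hom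

def eraseR {B : V} (m : B ⟶ M.e) (X : V) : M.t X B ⟶ X := M.map (𝟙 X) m ≫ (M.r X).hom

lemma assoc_map_eraseL {B : V} (m : B ⟶ M.e) (A Y : V) :
    (M.a A B Y).hom ≫ M.map (𝟙 A) (M.eraseL m Y) = M.map (M.eraseR m A) (𝟙 Y) := by
  rw [eraseL, eraseR, M.map_id_comp, ← Category.assoc, ← M.a_nat, Category.assoc, M.triangle,
    M.map_comp_id]

end MonStr

namespace LDCStr

variable {V : Type u} [Category.{v} V] (L : LDCStr V)

abbrev op : LDCStr Vᵒᵖ where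
  T := L.P.op
  P := L.T.op
  δL A B X := (L.δR A.unop B.unop X.unop).op
  δR A B X := (L.δL A.unop B.unop X.unop).op
  δL_nat f g h := Quiver.Hom.unop_inj (L.δR_nat f.unop g.unop h.unop).symm
  δR_nat f g h := Quiver.Hom.unop_inj (L.δL_nat f.unop g.unop h.unop).symm
  unit_δL A B := Quiver.Hom.unop_inj (L.counit_δR A.unop B.unop)
  unit_δR A B := Quiver.Hom.unop_inj (L.counit_δL A.unop B.unop)
  counit_δR A B := Quiver.Hom.unop_inj (L.unit_δL A.unop B.unop)
  counit_δL A B := Quiver.Hom.unop_inj (L.unit_δR A.unop B.unop)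
  assoc_δL A B X Y := Quiver.Hom.unop_inj <| by
    simpa only [unop_comp, Iso.op_hom, Iso.op_inv, Iso.symm_hom, Iso.symm_inv,
      Quiver.Hom.unop_op, unop_id, Category.assoc] using L.assoc_δR' A.unop B.unop X.unop Y.unop
  assoc_δR A B X Y := Quiver.Hom.unop_inj <| by
    simpa only [unop_comp, Iso.op_hom, Iso.op_inv, Iso.symm_hom, Iso.symm_inv,
      Quiver.Hom.unop_op, unop_id, Category.assoc] using L.assoc_δL' A.unop B.unop X.unop Y.unop
  assoc_δL' A B X Y := Quiver.Hom.unop_inj <| by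
    simpa only [unop_comp, Iso.op_hom, Iso.op_inv, Iso.symm_hom, Iso.symm_inv,
      Quiver.Hom.unop_op, unop_id, Category.assoc] using L.assoc_δR A.unop B.unop X.unop Y.unop
  assoc_δR' A B X Y := Quiver.Hom.unop_inj <| by
    simpa only [unop_comp, Iso.op_hom, Iso.op_inv, Iso.symm_hom, Iso.symm_inv,
      Quiver.Hom.unop_op, unop_id, Category.assoc] using L.assoc_δL A.unop B.unop X.unop Y.unop
  leftright₁ A B X Y := Quiver.Hom.unop_inj <| by
    simpa only [unop_comp, Iso.op_hom, Iso.op_inv, Iso.symm_hom, Iso.symm_inv,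
      Quiver.Hom.unop_op, unop_id, Category.assoc] using L.leftright₂ A.unop B.unop X.unop Y.unop
  leftright₂ A B X Y := Quiver.Hom.unop_inj <| by
    simpa only [unop_comp, Iso.op_hom, Iso.op_inv, Iso.symm_hom, Iso.symm_inv,
      Quiver.Hom.unop_op, unop_id, Category.assoc] using L.leftright₁ A.unop B.unop X.unop Y.unop

lemma δL_nat_left {A A' : V} (f : A ⟶ A') (B X : V) :
    L.T.map f (𝟙 (L.P.t B X)) ≫ L.δL A' B X = L.δL A B X ≫ L.P.map (L.T.map f (𝟙 B)) (𝟙 X) := by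
  simpa only [L.P.map_id] using L.δL_nat f (𝟙 B) (𝟙 X)

lemma δL_nat_right (A B : V) {X X' : V} (h : X ⟶ X') :
    L.T.map (𝟙 A) (L.P.map (𝟙 B) h) ≫ L.δL A B X' = L.δL A B X ≫ L.P.map (𝟙 (L.T.t A B)) h := by
  simpa only [L.T.map_id] using L.δL_nat (𝟙 A) (𝟙 B) h

lemma δR_nat_left {A A' : V} (f : A ⟶ A') (B X : V) :
    L.T.map (L.P.map f (𝟙 B)) (𝟙 X) ≫ L.δR A' B X = L.δR A B X ≫ L.P.map f (𝟙 (L.T.t B X)) := by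
  simpa only [L.T.map_id] using L.δR_nat f (𝟙 B) (𝟙 X)

lemma δR_nat_right (A B : V) {X X' : V} (h : X ⟶ X') :
    L.T.map (𝟙 (L.P.t A B)) h ≫ L.δR A B X' = L.δR A B X ≫ L.P.map (𝟙 A) (L.T.map (𝟙 B) h) := by
  simpa only [L.P.map_id] using L.δR_nat (𝟙 A) (𝟙 B) h

lemma δL_unit_hom (A B : V) :
    L.δL L.T.e A B ≫ L.P.map (L.T.l A).hom (𝟙 B) = (L.T.l (L.P.t A B)).hom := by
  rw [← cancel_epi (L.T.l _).inv, reassoc_of% L.unit_δL, ← L.P.map_comp_id, Iso.inv_hom_id,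
    L.P.map_id, Iso.inv_hom_id]

lemma δR_unit_hom (A B : V) :
    L.δR A B L.T.e ≫ L.P.map (𝟙 A) (L.T.r B).hom = (L.T.r (L.P.t A B)).hom := by
  rw [← cancel_epi (L.T.r _).inv, reassoc_of% L.unit_δR, ← L.P.map_id_comp, Iso.inv_hom_id,
    L.P.map_id, Iso.inv_hom_id]

lemma counit_inv_δL (A B : V) :
    L.T.map (𝟙 A) (L.P.r B).inv ≫ L.δL A B L.P.e = (L.P.r (L.T.t A B)).inv := by
  rw [← Iso.comp_hom_eq_id, Category.assoc, L.counit_δL, ← L.T.map_id_comp, Iso.inv_hom_id,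
    L.T.map_id]

lemma counit_inv_δR (A B : V) :
    L.T.map (L.P.l A).inv (𝟙 B) ≫ L.δR L.P.e A B = (L.P.l (L.T.t A B)).inv := by
  rw [← Iso.comp_hom_eq_id, Category.assoc, L.counit_δR, ← L.T.map_comp_id, Iso.inv_hom_id,
    L.T.map_id]

variable (m : L.P.e ⟶ L.T.e)

def mixL (A B : V) : L.T.t A B ⟶ L.P.t A B :=
  L.T.map (𝟙 A) ((L.P.l B).inv ≫ L.P.map m (𝟙 B)) ≫ L.δL A L.T.e B ≫
    L.P.map (L.T.r A).hom (𝟙 B)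

def mixR (A B : V) : L.T.t A B ⟶ L.P.t A B :=
  L.T.map ((L.P.r A).inv ≫ L.P.map (𝟙 A) m) (𝟙 B) ≫ L.δR A L.T.e B ≫
    L.P.map (𝟙 A) (L.T.l B).hom

lemma isMix_iff : L.IsMix m ↔ ∀ A B, L.mixR m A B = L.mixL m A B := Iff.rfl

lemma mixL_eq (A B : V) :
    L.mixL m A B = L.T.map (𝟙 A) (L.P.l B).inv ≫ L.δL A L.P.e B ≫
      L.P.map (L.T.eraseR m A) (𝟙 B) := by
  rw [mixL, MonStr.eraseR, L.T.map_id_comp, Category.assoc, reassoc_of% (L.δL_nat (𝟙 A) m (𝟙 B)),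
    L.P.map_comp_id]

lemma mixR_eq (A B : V) :
    L.mixR m A B = L.T.map (L.P.r A).inv (𝟙 B) ≫ L.δR A L.P.e B ≫
      L.P.map (𝟙 A) (L.T.eraseL m B) := by
  rw [mixR, MonStr.eraseL, L.T.map_comp_id, Category.assoc, reassoc_of% (L.δR_nat (𝟙 A) m (𝟙 B)),
    L.P.map_id_comp]

lemma unop_op_mixL (A B : Vᵒᵖ) : (L.op.mixL m.op A B).unop = L.mixR m A.unop B.unop := by
  rw [mixR_eq]
  simp only [mixL, MonStr.eraseL, unop_comp, Iso.op_hom, Iso.op_inv, Iso.symm_hom, Iso.symm_inv,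
    Quiver.Hom.unop_op, unop_id, Category.assoc]

lemma unop_op_mixR (A B : Vᵒᵖ) : (L.op.mixR m.op A B).unop = L.mixL m A.unop B.unop := by
  rw [mixL_eq]
  simp only [mixR, MonStr.eraseR, unop_comp, Iso.op_hom, Iso.op_inv, Iso.symm_hom, Iso.symm_inv,
    Quiver.Hom.unop_op, unop_id, Category.assoc]

lemma isMix_op_iff : L.op.IsMix m.op ↔ L.IsMix m := by
  simp only [isMix_iff, ← Quiver.Hom.unop_inj.eq_iff, unop_op_mixL, unop_op_mixR]
  exact ⟨fun h A B => (h (Opposite.op A) (Opposite.op B)).symm,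
    fun h A B => (h A.unop B.unop).symm⟩

def absorbL (k : L.T.t L.P.e L.P.e ⟶ L.P.e) (X : V) : L.T.t L.P.e X ⟶ X :=
  L.T.map (𝟙 L.P.e) (L.P.l X).inv ≫ L.δL L.P.e L.P.e X ≫ L.P.map k (𝟙 X) ≫ (L.P.l X).hom

def absorbR (k : L.T.t L.P.e L.P.e ⟶ L.P.e) (X : V) : L.T.t X L.P.e ⟶ X :=
  L.T.map (L.P.r X).inv (𝟙 L.P.e) ≫ L.δR X L.P.e L.P.e ≫ L.P.map (𝟙 X) k ≫ (L.P.r X).hom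

lemma absorbL_eraseL (X : V) : L.absorbL (L.T.eraseL m L.P.e) X = L.T.eraseL m X := by
  simp only [absorbL, MonStr.eraseL, L.P.map_comp_id, Category.assoc]
  rw [← reassoc_of% (L.δL_nat_left m L.P.e X), reassoc_of% (L.δL_unit_hom L.P.e X), ← L.T.l_nat,
    reassoc_of% (L.T.whisker_exchange m (L.P.l X).hom),
    reassoc_of% (L.T.map_id_inv_hom_id L.P.e (L.P.l X))]

lemma absorbR_eraseR (X : V) : L.absorbR (L.T.eraseR m L.P.e) X = L.T.eraseR m X := by
  simp only [absorbR, MonStr.eraseR, L.P.map_id_comp, Category.assoc]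
  rw [← reassoc_of% (L.δR_nat_right X L.P.e m), reassoc_of% (L.δR_unit_hom X L.P.e), ← L.T.r_nat,
    ← reassoc_of% (L.T.whisker_exchange (L.P.r X).hom m),
    reassoc_of% (L.T.map_inv_hom_id_id (L.P.r X) L.P.e)]

lemma δR_absorbL_eq_δL_absorbR (k : L.T.t L.P.e L.P.e ⟶ L.P.e) (A B : V) :
    L.T.map (L.P.r A).inv (𝟙 B) ≫ L.δR A L.P.e B ≫ L.P.map (𝟙 A) (L.absorbL k B)
      = L.T.map (𝟙 A) (L.P.l B).inv ≫ L.δL A L.P.e B ≫ L.P.map (L.absorbR k A) (𝟙 B) := by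
  have leftright : L.δR A L.P.e (L.P.t L.P.e B) ≫ L.P.map (𝟙 A) (L.δL L.P.e L.P.e B)
      = L.δL (L.P.t A L.P.e) L.P.e B ≫ L.P.map (L.δR A L.P.e L.P.e) (𝟙 B)
          ≫ (L.P.a A (L.T.t L.P.e L.P.e) B).hom := by
    rw [← Category.assoc, L.leftright₁, Category.assoc, Category.assoc, Iso.inv_hom_id,
      Category.comp_id]
  simp only [absorbL, absorbR, L.P.map_id_comp, L.P.map_comp_id]
  rw [← reassoc_of% (L.δR_nat_right A L.P.e (L.P.l B).inv), reassoc_of% leftright,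
    ← reassoc_of% (L.P.a_nat (𝟙 A) k (𝟙 B)), L.P.triangle,
    reassoc_of% (L.T.whisker_exchange (L.P.r A).inv (L.P.l B).inv),
    reassoc_of% (L.δL_nat_left (L.P.r A).inv L.P.e B)]

lemma isMix_of_eraseL_eq_eraseR (h : L.T.eraseL m L.P.e = L.T.eraseR m L.P.e) : L.IsMix m := by
  rw [isMix_iff]
  intro A B
  rw [mixR_eq, mixL_eq, ← L.absorbL_eraseL m B, ← L.absorbR_eraseR m A, h,
    δR_absorbL_eq_δL_absorbR]

lemma absorbL_nat (k : L.T.t L.P.e L.P.e ⟶ L.P.e) {X Y : V} (f : X ⟶ Y) :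
    L.T.map (𝟙 L.P.e) f ≫ L.absorbL k Y = L.absorbL k X ≫ f := by
  simp only [absorbL, Category.assoc]
  rw [← reassoc_of% (L.T.map_id_comp L.P.e f (L.P.l Y).inv), L.P.l_inv_nat, L.T.map_id_comp,
    Category.assoc, reassoc_of% (L.δL_nat_right L.P.e L.P.e f),
    ← reassoc_of% (L.P.whisker_exchange k f), L.P.l_nat]

lemma absorbL_unit (k : L.T.t L.P.e L.P.e ⟶ L.P.e) : L.absorbL k L.P.e = k := by
  rw [absorbL, L.P.unitors_equal, L.P.r_nat, reassoc_of% (L.counit_δL L.P.e L.P.e),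
    reassoc_of% (L.T.map_id_inv_hom_id L.P.e (L.P.r L.P.e))]

lemma rightUnitor_inv_δR (A Y : V) :
    L.T.map (L.P.r (L.T.t A L.P.e)).inv (𝟙 Y) ≫ L.δR (L.T.t A L.P.e) L.P.e Y
      = (L.T.a A L.P.e Y).hom ≫ L.T.map (𝟙 A) (L.P.l (L.T.t L.P.e Y)).inv
          ≫ L.δL A L.P.e (L.T.t L.P.e Y) := by
  rw [← L.counit_inv_δL, ← L.counit_inv_δR, L.T.map_comp_id, Category.assoc, L.leftright₂,
    reassoc_of% (L.T.a_nat (𝟙 A) (L.P.r L.P.e).inv (𝟙 Y)), L.T.map_id_comp, L.P.unitors_equal,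
    Category.assoc]

lemma assoc_absorbL (k : L.T.t L.P.e L.P.e ⟶ L.P.e) (Y : V) :
    (L.T.a L.P.e L.P.e Y).hom ≫ L.absorbL k (L.T.t L.P.e Y) = L.T.map k (𝟙 Y) := by
  rw [absorbL, ← reassoc_of% (L.rightUnitor_inv_δR L.P.e Y),
    ← reassoc_of% (L.δR_nat_left k L.P.e Y), L.counit_δR, ← L.T.map_comp_id, ← L.T.map_comp_id,
    L.P.unitors_equal, L.P.r_nat, Iso.inv_hom_id_assoc]

lemma eraseL_eq_eraseR_of_comp_eraseR_eq_id (Δ : L.P.e ⟶ L.T.t L.P.e L.P.e)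
    (hΔ : Δ ≫ L.T.eraseR m L.P.e = 𝟙 L.P.e) : L.T.eraseL m L.P.e = L.T.eraseR m L.P.e := by
  have h₁ : L.T.map Δ (𝟙 L.P.e) ≫ (L.T.a _ _ _).hom ≫ L.absorbL (L.T.eraseR m L.P.e) _ = 𝟙 _ := by
    rw [assoc_absorbL, ← L.T.map_comp_id, hΔ, L.T.map_id]
  have h₂ : L.T.map Δ (𝟙 L.P.e) ≫ (L.T.a _ _ _).hom ≫ L.T.map (𝟙 L.P.e) (L.T.eraseL m L.P.e)
      = 𝟙 _ := by
    rw [L.T.assoc_map_eraseL, ← L.T.map_comp_id, hΔ, L.T.map_id]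
  calc L.T.eraseL m L.P.e
      = (L.T.map Δ (𝟙 L.P.e) ≫ (L.T.a _ _ _).hom ≫ L.absorbL (L.T.eraseR m L.P.e) _)
          ≫ L.T.eraseL m L.P.e := by rw [h₁, Category.id_comp]
    _ = (L.T.map Δ (𝟙 L.P.e) ≫ (L.T.a _ _ _).hom ≫ L.T.map (𝟙 L.P.e) (L.T.eraseL m L.P.e))
          ≫ L.absorbL (L.T.eraseR m L.P.e) L.P.e := by
        simp only [Category.assoc, absorbL_nat]
    _ = L.T.eraseR m L.P.e := by rw [h₂, Category.id_comp, absorbL_unit]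

lemma isMix_of_isComonoid {Δ : L.P.e ⟶ L.T.t L.P.e L.P.e} {e : L.P.e ⟶ L.T.e}
    (h : L.T.IsComonoid L.P.e Δ e) : L.IsMix e :=
  L.isMix_of_eraseL_eq_eraseR e (L.eraseL_eq_eraseR_of_comp_eraseR_eq_id e Δ h.2.2)

lemma isMix_of_isMonoid {n : L.P.t L.T.e L.T.e ⟶ L.T.e} {u : L.P.e ⟶ L.T.e}
    (h : L.P.IsMonoid L.T.e n u) : L.IsMix u :=
  (L.isMix_op_iff u).1 (L.op.isMix_of_isComonoid ((L.P.isComonoid_op_iff n u).2 h))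

end LDCStr

/-- (Führmann–Pym) Every symmetric linearly distributive category in which `⊥`
carries a `⊗`-comonoid structure `⟨⊥, Δ_⊥, e_⊥⟩` is mix with `m = e_⊥`; dually,
every symmetric linearly distributive category in which `⊤` carries a
`⊕`-monoid structure `⟨⊤, ∇_⊤, u_⊤⟩` is mix with `m = u_⊤`. -/
theorem sldc_comonoid_or_monoid_implies_mix {V : Type u} [Category.{v} V]
    (S : SLDCStr V) :
    (∀ (Δ : S.L.P.e ⟶ S.L.T.t S.L.P.e S.L.P.e) (e : S.L.P.e ⟶ S.L.T.e),
      S.L.T.IsComonoid S.L.P.e Δ e → S.L.IsMix e) ∧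
    (∀ (n : S.L.P.t S.L.T.e S.L.T.e ⟶ S.L.T.e) (u : S.L.P.e ⟶ S.L.T.e),
      S.L.P.IsMonoid S.L.T.e n u → S.L.IsMix u) :=
  ⟨fun _ _ h => S.L.isMix_of_isComonoid h, fun _ _ h => S.L.isMix_of_isMonoid h⟩
end

section
/- If α = (α_⊗, α_⊕) is a medial linear transformation between Frobenius medial linear functors F, G : X → Y (so F_⊗ = F_⊕ = F and G_⊗ = G_⊕ = G), then for every object A, the component α_⊗_A : F(A) → G(A) is a section of α_⊕_A : G(A) → F(A); that is, α_⊗_A; α_⊕_A = 1_{F(A)}. -/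
open CategoryTheory

universe v u

/-- A symmetric medial linearly distributive category: a symmetric LDC equipped
with ⊥-contraction, ⊤-cocontraction, a nullary mix map, and a natural medial
transformation, satisfying the mix condition, the duoidal axioms (MLDC.2)–(MLDC.4)
for `(V, ⊕, ⊥, ⊗, ⊤)`, the compatibility (MLDC.1) of the medial maps with the
linear distributivities, and the symmetry conditions (BDUO). -/
structure SMLDCStr (V : Type u) [Category.{v} V] where
  S : SLDCStr V
  Δbot : S.L.P.e ⟶ S.L.T.t S.L.P.e S.L.P.e
  nablaTop : S.L.P.t S.L.T.e S.L.T.e ⟶ S.L.T.e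
  m : S.L.P.e ⟶ S.L.T.e
  med : ∀ A B X Y : V,
    S.L.P.t (S.L.T.t A B) (S.L.T.t X Y) ⟶ S.L.T.t (S.L.P.t A X) (S.L.P.t B Y)
  med_nat : ∀ {A A' B B' X X' Y Y' : V} (f : A ⟶ A') (g : B ⟶ B')
      (h : X ⟶ X') (k : Y ⟶ Y'),
    S.L.P.map (S.L.T.map f g) (S.L.T.map h k) ≫ med A' B' X' Y'
      = med A B X Y ≫ S.L.T.map (S.L.P.map f h) (S.L.P.map g k)
  -- the underlying LDC is mix with respect to `m`
  isMix : S.L.IsMix m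
  -- (MLDC.2): `(⊥, Δ_⊥, m)` is a (cocommutative) ⊗-comonoid
  bot_comonoid : S.L.T.IsComonoid S.L.P.e Δbot m
  bot_cocomm : Δbot ≫ (S.bT S.L.P.e S.L.P.e).hom = Δbot
  -- (MLDC.2): `(⊤, ∇_⊤, m)` is a (commutative) ⊕-monoid
  top_monoid : S.L.P.IsMonoid S.L.T.e nablaTop m
  top_comm : (S.bP S.L.T.e S.L.T.e).hom ≫ nablaTop = nablaTop
  -- (MLDC.3): the medial maps interact coherently with the associators
  med_assoc_T : ∀ A B C D E F : V,
    med (S.L.T.t A B) C (S.L.T.t D E) F ≫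
        S.L.T.map (med A B D E) (𝟙 (S.L.P.t C F)) ≫
          (S.L.T.a (S.L.P.t A D) (S.L.P.t B E) (S.L.P.t C F)).hom
      = S.L.P.map (S.L.T.a A B C).hom (S.L.T.a D E F).hom ≫
          med A (S.L.T.t B C) D (S.L.T.t E F) ≫
            S.L.T.map (𝟙 (S.L.P.t A D)) (med B C E F)
  med_assoc_P : ∀ A B C D E F : V,
    (S.L.P.a (S.L.T.t A B) (S.L.T.t C D) (S.L.T.t E F)).inv ≫
        S.L.P.map (med A B C D) (𝟙 (S.L.T.t E F)) ≫
          med (S.L.P.t A C) (S.L.P.t B D) E F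
      = S.L.P.map (𝟙 (S.L.T.t A B)) (med C D E F) ≫
          med A B (S.L.P.t C E) (S.L.P.t D F) ≫
            S.L.T.map (S.L.P.a A C E).inv (S.L.P.a B D F).inv
  -- (MLDC.4): the medial maps interact coherently with the unitors
  med_unit₁ : ∀ A B : V,
    S.L.P.map Δbot (𝟙 (S.L.T.t A B)) ≫ med S.L.P.e S.L.P.e A B ≫
        S.L.T.map (S.L.P.l A).hom (S.L.P.l B).hom
      = (S.L.P.l (S.L.T.t A B)).hom
  med_unit₂ : ∀ A B : V,
    S.L.P.map (𝟙 (S.L.T.t A B)) Δbot ≫ med A B S.L.P.e S.L.P.e ≫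
        S.L.T.map (S.L.P.r A).hom (S.L.P.r B).hom
      = (S.L.P.r (S.L.T.t A B)).hom
  med_unit₃ : ∀ A B : V,
    S.L.P.map (S.L.T.l A).inv (S.L.T.l B).inv ≫ med S.L.T.e A S.L.T.e B ≫
        S.L.T.map nablaTop (𝟙 (S.L.P.t A B))
      = (S.L.T.l (S.L.P.t A B)).inv
  med_unit₄ : ∀ A B : V,
    S.L.P.map (S.L.T.r A).inv (S.L.T.r B).inv ≫ med A S.L.T.e B S.L.T.e ≫
        S.L.T.map (𝟙 (S.L.P.t A B)) nablaTop
      = (S.L.T.r (S.L.P.t A B)).inv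
  -- (MLDC.1): the medial maps interact coherently with the linear distributivities
  med_δR : ∀ A B C D X : V,
    S.L.T.map (med A B C D) (𝟙 X) ≫
        (S.L.T.a (S.L.P.t A C) (S.L.P.t B D) X).hom ≫
          S.L.T.map (𝟙 (S.L.P.t A C)) (S.L.δR B D X)
      = S.L.δR (S.L.T.t A B) (S.L.T.t C D) X ≫
          S.L.P.map (𝟙 (S.L.T.t A B)) (S.L.T.a C D X).hom ≫
            med A B C (S.L.T.t D X)
  med_δL : ∀ A B C D X : V,
    S.L.T.map (𝟙 X) (med A B C D) ≫
        (S.L.T.a X (S.L.P.t A C) (S.L.P.t B D)).inv ≫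
          S.L.T.map (S.L.δL X A C) (𝟙 (S.L.P.t B D))
      = S.L.δL X (S.L.T.t A B) (S.L.T.t C D) ≫
          S.L.P.map (S.L.T.a X A B).inv (𝟙 (S.L.T.t C D)) ≫
            med (S.L.T.t X A) B C D
  med_δR' : ∀ A B C D X : V,
    S.L.P.map (S.L.δR X A B) (𝟙 (S.L.T.t C D)) ≫
        (S.L.P.a X (S.L.T.t A B) (S.L.T.t C D)).hom ≫
          S.L.P.map (𝟙 X) (med A B C D)
      = med (S.L.P.t X A) B C D ≫
          S.L.T.map (S.L.P.a X A C).hom (𝟙 (S.L.P.t B D)) ≫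
            S.L.δR X (S.L.P.t A C) (S.L.P.t B D)
  med_δL' : ∀ A B C D X : V,
    S.L.P.map (𝟙 (S.L.T.t A B)) (S.L.δL C D X) ≫
        (S.L.P.a (S.L.T.t A B) (S.L.T.t C D) X).inv ≫
          S.L.P.map (med A B C D) (𝟙 X)
      = med A B C (S.L.P.t D X) ≫
          S.L.T.map (𝟙 (S.L.P.t A C)) (S.L.P.a B D X).inv ≫
            S.L.δL (S.L.P.t A C) (S.L.P.t B D) X
  -- (BDUO): the medial maps interact coherently with the braidings
  med_bT : ∀ A B C D : V,
    med A B C D ≫ (S.bT (S.L.P.t A C) (S.L.P.t B D)).hom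
      = S.L.P.map (S.bT A B).hom (S.bT C D).hom ≫ med B A D C
  med_bP : ∀ A B C D : V,
    med A B C D ≫ S.L.T.map (S.bP A C).hom (S.bP B D).hom
      = (S.bP (S.L.T.t A B) (S.L.T.t C D)).hom ≫ med C D A B

/-- A medial bimonoid in a symmetric medial linearly distributive category:
an object `A` with a `⊗`-comonoid structure `⟨A, Δ, e⟩` and a `⊕`-monoid
structure `⟨A, ∇, u⟩` satisfying the four compatibility conditions (MB). -/
def SMLDCStr.IsMedialBimonoid {V : Type u} [Category.{v} V] (M : SMLDCStr V)
    (A : V) (Δ : A ⟶ M.S.L.T.t A A) (e : A ⟶ M.S.L.T.e)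
    (n : M.S.L.P.t A A ⟶ A) (u : M.S.L.P.e ⟶ A) : Prop :=
  M.S.L.T.IsComonoid A Δ e ∧
  M.S.L.P.IsMonoid A n u ∧
  (n ≫ Δ = M.S.L.P.map Δ Δ ≫ M.med A A A A ≫ M.S.L.T.map n n) ∧
  (u ≫ e = M.m) ∧
  (n ≫ e = M.S.L.P.map e e ≫ M.nablaTop) ∧
  (u ≫ Δ = M.Δbot ≫ M.S.L.T.map u u)

/-- A bicommutative medial bimonoid: the comonoid is cocommutative and the
monoid is commutative. -/
def SMLDCStr.IsBicommMedialBimonoid {V : Type u} [Category.{v} V] (M : SMLDCStr V)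
    (A : V) (Δ : A ⟶ M.S.L.T.t A A) (e : A ⟶ M.S.L.T.e)
    (n : M.S.L.P.t A A ⟶ A) (u : M.S.L.P.e ⟶ A) : Prop :=
  M.IsMedialBimonoid A Δ e n u ∧
  (Δ ≫ (M.S.bT A A).hom = Δ) ∧
  ((M.S.bP A A).hom ≫ n = n)

/-- The canonical flip of the symmetric tensor structure of an SMLDC. -/
def SMLDCStr.flipT {V : Type u} [Category.{v} V] (M : SMLDCStr V) (W X Y Z : V) :
    M.S.L.T.t (M.S.L.T.t W X) (M.S.L.T.t Y Z)
      ⟶ M.S.L.T.t (M.S.L.T.t W Y) (M.S.L.T.t X Z) :=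
  (M.S.L.T.a W X (M.S.L.T.t Y Z)).hom ≫
    M.S.L.T.map (𝟙 W)
      ((M.S.L.T.a X Y Z).inv ≫ M.S.L.T.map (M.S.bT X Y).hom (𝟙 Z) ≫
        (M.S.L.T.a Y X Z).hom) ≫
    (M.S.L.T.a W Y (M.S.L.T.t X Z)).inv

variable {V : Type u} [Category.{v} V] {W : Type u} [Category.{v} W]

/-- A Frobenius medial linear functor between symmetric medial linearly
distributive categories: a single functor `F` that is strong symmetric
`⊗`-monoidal and strong symmetric `⊕`-comonoidal, whose linear strengths are
`n_⊕` and `m_⊗`, satisfying the Frobenius, mix, and medial compatibility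
conditions. -/
structure FrobMedialFunctor (M : SMLDCStr V) (N : SMLDCStr W) where
  F : V ⥤ W
  mT : N.S.L.T.e ≅ F.obj M.S.L.T.e
  mt : ∀ A B : V, N.S.L.T.t (F.obj A) (F.obj B) ≅ F.obj (M.S.L.T.t A B)
  nb : F.obj M.S.L.P.e ≅ N.S.L.P.e
  np : ∀ A B : V, F.obj (M.S.L.P.t A B) ≅ N.S.L.P.t (F.obj A) (F.obj B)
  mt_nat : ∀ {A A' B B' : V} (f : A ⟶ A') (g : B ⟶ B'),
    N.S.L.T.map (F.map f) (F.map g) ≫ (mt A' B').hom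
      = (mt A B).hom ≫ F.map (M.S.L.T.map f g)
  np_nat : ∀ {A A' B B' : V} (f : A ⟶ A') (g : B ⟶ B'),
    F.map (M.S.L.P.map f g) ≫ (np A' B').hom
      = (np A B).hom ≫ N.S.L.P.map (F.map f) (F.map g)
  -- strong symmetric ⊗-monoidal structure
  mt_assoc : ∀ A B C : V,
    N.S.L.T.map (mt A B).hom (𝟙 (F.obj C)) ≫ (mt (M.S.L.T.t A B) C).hom ≫
        F.map (M.S.L.T.a A B C).hom
      = (N.S.L.T.a (F.obj A) (F.obj B) (F.obj C)).hom ≫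
          N.S.L.T.map (𝟙 (F.obj A)) (mt B C).hom ≫ (mt A (M.S.L.T.t B C)).hom
  mt_lu : ∀ A : V,
    N.S.L.T.map mT.hom (𝟙 (F.obj A)) ≫ (mt M.S.L.T.e A).hom ≫
        F.map (M.S.L.T.l A).hom = (N.S.L.T.l (F.obj A)).hom
  mt_ru : ∀ A : V,
    N.S.L.T.map (𝟙 (F.obj A)) mT.hom ≫ (mt A M.S.L.T.e).hom ≫
        F.map (M.S.L.T.r A).hom = (N.S.L.T.r (F.obj A)).hom
  mt_braid : ∀ A B : V,
    (mt A B).hom ≫ F.map (M.S.bT A B).hom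
      = (N.S.bT (F.obj A) (F.obj B)).hom ≫ (mt B A).hom
  -- strong symmetric ⊕-comonoidal structure
  np_coassoc : ∀ A B C : V,
    F.map (M.S.L.P.a A B C).hom ≫ (np A (M.S.L.P.t B C)).hom ≫
        N.S.L.P.map (𝟙 (F.obj A)) (np B C).hom
      = (np (M.S.L.P.t A B) C).hom ≫ N.S.L.P.map (np A B).hom (𝟙 (F.obj C)) ≫
          (N.S.L.P.a (F.obj A) (F.obj B) (F.obj C)).hom
  np_lu : ∀ A : V,
    (np M.S.L.P.e A).hom ≫ N.S.L.P.map nb.hom (𝟙 (F.obj A)) ≫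
        (N.S.L.P.l (F.obj A)).hom = F.map (M.S.L.P.l A).hom
  np_ru : ∀ A : V,
    (np A M.S.L.P.e).hom ≫ N.S.L.P.map (𝟙 (F.obj A)) nb.hom ≫
        (N.S.L.P.r (F.obj A)).hom = F.map (M.S.L.P.r A).hom
  np_braid : ∀ A B : V,
    F.map (M.S.bP A B).hom ≫ (np B A).hom
      = (np A B).hom ≫ (N.S.bP (F.obj A) (F.obj B)).hom
  -- Frobenius conditions
  frob_L : ∀ A B X : V,
    N.S.L.T.map (𝟙 (F.obj A)) (np B X).hom ≫
        N.S.L.δL (F.obj A) (F.obj B) (F.obj X) ≫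
          N.S.L.P.map (mt A B).hom (𝟙 (F.obj X))
      = (mt A (M.S.L.P.t B X)).hom ≫ F.map (M.S.L.δL A B X) ≫
          (np (M.S.L.T.t A B) X).hom
  frob_R : ∀ A B X : V,
    N.S.L.T.map (np A B).hom (𝟙 (F.obj X)) ≫
        N.S.L.δR (F.obj A) (F.obj B) (F.obj X) ≫
          N.S.L.P.map (𝟙 (F.obj A)) (mt B X).hom
      = (mt (M.S.L.P.t A B) X).hom ≫ F.map (M.S.L.δR A B X) ≫
          (np A (M.S.L.T.t B X)).hom
  -- mix compatibility (MixFLF)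
  mix_compat : nb.hom ≫ N.m ≫ mT.hom = F.map M.m
  -- medial compatibility
  delta_compat : nb.hom ≫ N.Δbot ≫ N.S.L.T.map nb.inv nb.inv ≫
      (mt M.S.L.P.e M.S.L.P.e).hom = F.map M.Δbot
  nabla_compat : (np M.S.L.T.e M.S.L.T.e).hom ≫ N.S.L.P.map mT.inv mT.inv ≫
      N.nablaTop ≫ mT.hom = F.map M.nablaTop
  med_compat : ∀ A B C D : V,
    F.map (M.med A B C D) ≫ (mt (M.S.L.P.t A C) (M.S.L.P.t B D)).inv ≫
        N.S.L.T.map (np A C).hom (np B D).hom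
      = (np (M.S.L.T.t A B) (M.S.L.T.t C D)).hom ≫
          N.S.L.P.map (mt A B).inv (mt C D).inv ≫
            N.med (F.obj A) (F.obj B) (F.obj C) (F.obj D)

/-! `α_⊗ ≫ α_⊕` is recovered from the linear transformation condition at `(A, ⊥)`: postcomposing
it with the counit `1 ⊕ n_⊥` of `G` and the right unitor, the right-hand side collapses to
`F(ρ_A)` because `α_⊗` preserves `n_⊥`, while the left-hand side becomes `F(ρ_A) ≫ α_⊗ ≫ α_⊕`
by naturality of `α_⊗` and the counit axiom of `G`. Cancelling the isomorphism `F(ρ_A)` gives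
the claim. -/

namespace MonStr

variable (M : MonStr V)

theorem map_id_comp_map_id {X Y₁ Y₂ Y₃ : V} (f : Y₁ ⟶ Y₂) (g : Y₂ ⟶ Y₃) :
    M.map (𝟙 X) f ≫ M.map (𝟙 X) g = M.map (𝟙 X) (f ≫ g) := by
  rw [← M.map_comp, Category.id_comp]

theorem map_id_comp_map_id_assoc {X Y₁ Y₂ Y₃ Z : V} (f : Y₁ ⟶ Y₂) (g : Y₂ ⟶ Y₃)
    (h : M.t X Y₃ ⟶ Z) :
    M.map (𝟙 X) f ≫ M.map (𝟙 X) g ≫ h = M.map (𝟙 X) (f ≫ g) ≫ h := by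
  rw [← Category.assoc, map_id_comp_map_id]

theorem map_comp_id_comm {X₁ X₂ Y₁ Y₂ : V} (f : X₁ ⟶ X₂) (g : Y₁ ⟶ Y₂) :
    M.map f (𝟙 Y₁) ≫ M.map (𝟙 X₂) g = M.map (𝟙 X₁) g ≫ M.map f (𝟙 Y₂) := by
  rw [← M.map_comp, ← M.map_comp, Category.id_comp, Category.comp_id,
    Category.id_comp, Category.comp_id]

end MonStr

namespace FrobMedialFunctor

variable {M : SMLDCStr V} {N : SMLDCStr W} (F : FrobMedialFunctor M N)

theorem np_hom_comp_map_comp_counit {A : V} {Z : W} (f : F.F.obj A ⟶ Z) :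
    (F.np A M.S.L.P.e).hom ≫ N.S.L.P.map f (𝟙 (F.F.obj M.S.L.P.e)) ≫
        N.S.L.P.map (𝟙 Z) F.nb.hom ≫ (N.S.L.P.r Z).hom
      = F.F.map (M.S.L.P.r A).hom ≫ f := by
  rw [← Category.assoc (N.S.L.P.map _ _), N.S.L.P.map_comp_id_comm, Category.assoc,
    N.S.L.P.r_nat, ← F.np_ru]
  simp only [Category.assoc]

end FrobMedialFunctor

theorem medial_linear_transformation_section_general {M : SMLDCStr V} {N : SMLDCStr W}
    (F G : FrobMedialFunctor M N) (α : F.F ⟶ G.F) (β : G.F ⟶ F.F)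
    -- `α_⊗` is a `⊕`-monoidal transformation (for `m_⊥ = n_⊥⁻¹`, `m_⊕ = n_⊕⁻¹`)
    (hαP₁ : F.nb.inv ≫ α.app M.S.L.P.e = G.nb.inv)
    -- the linear transformation conditions (LT) with respect to the linear
    -- strengths `ν^R_⊗ = ν^L_⊗ = n_⊕` and `ν^R_⊕ = ν^L_⊕ = m_⊗`
    (hLT₁ : ∀ A B : V, α.app (M.S.L.P.t A B) ≫ (G.np A B).hom ≫
        N.S.L.P.map (β.app A) (𝟙 (G.F.obj B))
      = (F.np A B).hom ≫ N.S.L.P.map (𝟙 (F.F.obj A)) (α.app B)) :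
    ∀ A : V, α.app A ≫ β.app A = 𝟙 (F.F.obj A) := by
  intro A
  have hα_counit : α.app M.S.L.P.e ≫ G.nb.hom = F.nb.hom :=
    (Iso.eq_comp_inv _).mp ((Iso.inv_comp_eq _).mp hαP₁)
  have hLT := congrArg (· ≫ N.S.L.P.map (𝟙 (F.F.obj A)) G.nb.hom ≫
    (N.S.L.P.r (F.F.obj A)).hom) (hLT₁ A M.S.L.P.e)
  simp only [Category.assoc, G.np_hom_comp_map_comp_counit, ← α.naturality_assoc,
    N.S.L.P.map_id_comp_map_id_assoc, hα_counit, F.np_ru] at hLT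
  exact (cancel_epi (F.F.map (M.S.L.P.r A).hom)).mp (hLT.trans (Category.comp_id _).symm)

/-- If `α = (α_⊗, α_⊕)` is a medial linear transformation between Frobenius
medial linear functors `F, G : X ⟶ Y`, then each component `α_⊗` is a section of
`α_⊕`: `α_⊗ ≫ α_⊕ = 1_{F(A)}`. -/
theorem medial_linear_transformation_section {M : SMLDCStr V} {N : SMLDCStr W}
    (F G : FrobMedialFunctor M N) (α : F.F ⟶ G.F) (β : G.F ⟶ F.F)
    -- `α_⊗` is a `⊗`-monoidal transformation
    (hαT₁ : F.mT.hom ≫ α.app M.S.L.T.e = G.mT.hom)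
    (hαT₂ : ∀ A B : V, N.S.L.T.map (α.app A) (α.app B) ≫ (G.mt A B).hom
      = (F.mt A B).hom ≫ α.app (M.S.L.T.t A B))
    -- `α_⊗` is a `⊕`-monoidal transformation (for `m_⊥ = n_⊥⁻¹`, `m_⊕ = n_⊕⁻¹`)
    (hαP₁ : F.nb.inv ≫ α.app M.S.L.P.e = G.nb.inv)
    (hαP₂ : ∀ A B : V, N.S.L.P.map (α.app A) (α.app B) ≫ (G.np A B).inv
      = (F.np A B).inv ≫ α.app (M.S.L.P.t A B))
    -- `α_⊕` is a `⊕`-comonoidal transformation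
    (hβP₁ : β.app M.S.L.P.e ≫ F.nb.hom = G.nb.hom)
    (hβP₂ : ∀ A B : V, β.app (M.S.L.P.t A B) ≫ (F.np A B).hom
      = (G.np A B).hom ≫ N.S.L.P.map (β.app A) (β.app B))
    -- `α_⊕` is a `⊗`-comonoidal transformation (for `n_⊤ = m_⊤⁻¹`, `n_⊗ = m_⊗⁻¹`)
    (hβT₁ : β.app M.S.L.T.e ≫ F.mT.inv = G.mT.inv)
    (hβT₂ : ∀ A B : V, β.app (M.S.L.T.t A B) ≫ (F.mt A B).inv
      = (G.mt A B).inv ≫ N.S.L.T.map (β.app A) (β.app B))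
    -- the linear transformation conditions (LT) with respect to the linear
    -- strengths `ν^R_⊗ = ν^L_⊗ = n_⊕` and `ν^R_⊕ = ν^L_⊕ = m_⊗`
    (hLT₁ : ∀ A B : V, α.app (M.S.L.P.t A B) ≫ (G.np A B).hom ≫
        N.S.L.P.map (β.app A) (𝟙 (G.F.obj B))
      = (F.np A B).hom ≫ N.S.L.P.map (𝟙 (F.F.obj A)) (α.app B))
    (hLT₂ : ∀ A B : V, α.app (M.S.L.P.t A B) ≫ (G.np A B).hom ≫
        N.S.L.P.map (𝟙 (G.F.obj A)) (β.app B)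
      = (F.np A B).hom ≫ N.S.L.P.map (α.app A) (𝟙 (F.F.obj B)))
    (hLT₃ : ∀ A B : V, N.S.L.T.map (𝟙 (G.F.obj A)) (α.app B) ≫
        (G.mt A B).hom ≫ β.app (M.S.L.T.t A B)
      = N.S.L.T.map (β.app A) (𝟙 (F.F.obj B)) ≫ (F.mt A B).hom)
    (hLT₄ : ∀ A B : V, N.S.L.T.map (α.app A) (𝟙 (G.F.obj B)) ≫
        (G.mt A B).hom ≫ β.app (M.S.L.T.t A B)
      = N.S.L.T.map (𝟙 (F.F.obj A)) (β.app B) ≫ (F.mt A B).hom) :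
    ∀ A : V, α.app A ≫ β.app A = 𝟙 (F.F.obj A) :=
  medial_linear_transformation_section_general F G α β hαP₁ hLT₁
end
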